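/- arXiv:2306.15901 — 2 statements merged into one kernel-verified Lean document; each statement's English description precedes it below -/
import Mathlib

section
/- For any complex numbers u, v and f(z) = z·ln|z| (with f(0)=0), setting y = max{|u|,|v|}, if y > 0 then |f(u) - f(v)| ≤ (|ln y| + 1)·|u - v|. -/
/-!
Write `f u - f v = log ‖v‖ • (u - v) + (log ‖u‖ - log ‖v‖) • u` with `‖u‖ ≤ ‖v‖`. The first term
is bounded by `|log ‖v‖| ‖u - v‖`, and by `log x ≤ x - 1` the second is at most
`‖u‖ log (‖v‖ / ‖u‖) ≤ ‖v‖ - ‖u‖ ≤ ‖u - v‖`.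
-/

noncomputable def f (z : ℂ) : ℂ := z * Real.log ‖z‖

open Real

lemma abs_log_sub_log_mul_le_sub {a b : ℝ} (ha : 0 ≤ a) (hab : a ≤ b) :
    |log b - log a| * a ≤ b - a := by
  rcases ha.eq_or_lt with rfl | ha
  · simpa using hab
  rw [abs_of_nonneg (sub_nonneg.2 (log_le_log ha hab)), ← log_div (ha.trans_le hab).ne' ha.ne']
  calc log (b / a) * a ≤ (b / a - 1) * a :=
        mul_le_mul_of_nonneg_right (log_le_sub_one_of_pos (div_pos (ha.trans_le hab) ha)) ha.le
    _ = b - a := by field_simp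

section NormedSpace

variable {E : Type*} [SeminormedAddCommGroup E] [NormedSpace ℝ E]

lemma norm_log_norm_smul_sub_le_of_norm_le {u v : E} (h : ‖u‖ ≤ ‖v‖) :
    ‖log ‖u‖ • u - log ‖v‖ • v‖ ≤ (|log ‖v‖| + 1) * ‖u - v‖ := by
  have hsplit : log ‖u‖ • u - log ‖v‖ • v = log ‖v‖ • (u - v) + (log ‖u‖ - log ‖v‖) • u := by
    rw [smul_sub, sub_smul]; abel
  have hsecond : ‖(log ‖u‖ - log ‖v‖) • u‖ ≤ ‖u - v‖ := by
    rw [norm_smul, Real.norm_eq_abs, abs_sub_comm]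
    calc |log ‖v‖ - log ‖u‖| * ‖u‖ ≤ ‖v‖ - ‖u‖ := abs_log_sub_log_mul_le_sub (norm_nonneg u) h
      _ ≤ ‖u - v‖ := by simpa only [norm_sub_rev v u] using norm_sub_norm_le v u
  calc ‖log ‖u‖ • u - log ‖v‖ • v‖
      ≤ ‖log ‖v‖ • (u - v)‖ + ‖(log ‖u‖ - log ‖v‖) • u‖ := hsplit ▸ norm_add_le _ _
    _ ≤ |log ‖v‖| * ‖u - v‖ + ‖u - v‖ := by
        rw [norm_smul, Real.norm_eq_abs]; gcongr
    _ = (|log ‖v‖| + 1) * ‖u - v‖ := by ring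

lemma norm_log_norm_smul_sub_le (u v : E) :
    ‖log ‖u‖ • u - log ‖v‖ • v‖ ≤ (|log (max ‖u‖ ‖v‖)| + 1) * ‖u - v‖ := by
  rcases le_total ‖u‖ ‖v‖ with h | h
  · rw [max_eq_right h]
    exact norm_log_norm_smul_sub_le_of_norm_le h
  · rw [max_eq_left h, norm_sub_rev, norm_sub_rev u]
    exact norm_log_norm_smul_sub_le_of_norm_le h

end NormedSpace

lemma f_eq_smul (z : ℂ) : f z = log ‖z‖ • z := by
  rw [f, mul_comm, Complex.real_smul]

theorem stmt_1_general (u v : ℂ) :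
    ‖f u - f v‖ ≤
      (|Real.log (max ‖u‖ ‖v‖)| + 1) * ‖u - v‖ := by
  rw [f_eq_smul, f_eq_smul]
  exact norm_log_norm_smul_sub_le u v

theorem stmt_1 (u v : ℂ) (hy : max ‖u‖ ‖v‖ > 0) :
    ‖f u - f v‖ ≤
      (|Real.log (max ‖u‖ ‖v‖)| + 1) * ‖u - v‖ :=
  stmt_1_general u v
end

section
/- Let Ω be a bounded measurable domain, α ∈ (0,1), and ε ∈ (0, δ_α] with δ_α = exp(α/(α-1)). If u, v ∈ L^∞(Ω) satisfy max{‖u‖_∞, ‖v‖_∞} ≤ ε, then ‖f(u) - f(v)‖_{L²(Ω)} ≤ H_α(ε)·‖u - v‖_{L^{2α}(Ω)}^α, where f(w) = w·ln|w| pointwise (f(0) = 0) and H_α(ε) = (2ε)^{1-α}(|ln ε| + 1). -/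
/-!
For `‖b‖ ≤ ‖a‖ ≤ 1` write `f a - f b = (a - b) log ‖a‖ + b (log ‖a‖ - log ‖b‖)`; the second term
has norm at most `‖a‖ - ‖b‖ ≤ ‖a - b‖`, so `‖f a - f b‖ ≤ ‖a - b‖ (1 - log ‖a‖)`. Splitting
`‖a - b‖ = ‖a - b‖ ^ α ‖a - b‖ ^ (1 - α)` and using `‖a - b‖ ≤ 2 ‖a‖`, it remains that
`s ↦ s ^ (1 - α) (1 - log s)` is increasing on `(0, δ_α]`, which is where the threshold `δ_α`
comes from. Squaring this pointwise Hölder bound and integrating gives the `L²` estimate.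
-/

open MeasureTheory

open Real

lemma mul_abs_log_sub_log_le {s t : ℝ} (ht : 0 ≤ t) (hts : t ≤ s) :
    t * |log s - log t| ≤ s - t := by
  rcases ht.eq_or_lt with rfl | ht
  · simpa using ht.trans hts
  rw [← log_div (ht.trans_le hts).ne' ht.ne', abs_of_nonneg (log_nonneg ((one_le_div ht).2 hts))]
  calc t * log (s / t) ≤ t * (s / t - 1) := by
        gcongr; exact log_le_sub_one_of_pos (div_pos (ht.trans_le hts) ht)
    _ = s - t := by field_simp

lemma norm_f_sub_f_le {a b : ℂ} (hba : ‖b‖ ≤ ‖a‖) (ha : ‖a‖ ≤ 1) :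
    ‖f a - f b‖ ≤ ‖a - b‖ * (1 - log ‖a‖) := by
  have hsplit : f a - f b = (a - b) * (log ‖a‖ : ℂ) + b * ((log ‖a‖ - log ‖b‖ : ℝ) : ℂ) := by
    unfold f; push_cast; ring
  calc ‖f a - f b‖ ≤ ‖a - b‖ * |log ‖a‖| + ‖b‖ * |log ‖a‖ - log ‖b‖| := by
        rw [hsplit]
        refine (norm_add_le _ _).trans_eq ?_
        simp only [norm_mul, Complex.norm_real, Real.norm_eq_abs]
    _ ≤ ‖a - b‖ * (-log ‖a‖) + ‖a - b‖ := by
        rw [abs_of_nonpos (log_nonpos (norm_nonneg a) ha)]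
        gcongr
        exact (mul_abs_log_sub_log_le (norm_nonneg b) hba).trans (norm_sub_norm_le a b)
    _ = ‖a - b‖ * (1 - log ‖a‖) := by ring

lemma rpow_mul_one_sub_log_le {β s ε : ℝ} (hβ : 0 < β) (hs : 0 ≤ s) (hsε : s ≤ ε)
    (hε : 1 ≤ β * (1 - log ε)) : s ^ β * (1 - log s) ≤ ε ^ β * (1 - log ε) := by
  have hL : 0 ≤ 1 - log ε := by nlinarith
  rcases hs.eq_or_lt with rfl | hs
  · rw [zero_rpow hβ.ne', zero_mul]
    exact mul_nonneg (rpow_nonneg hsε β) hL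
  set x := log ε - log s with hxdef
  have hx : 0 ≤ x := sub_nonneg.2 (log_le_log hs hsε)
  -- from `1 + β x ≤ exp (β x)` and `β (1 - log ε) ≥ 1`
  have hexp : 1 - log s ≤ (1 - log ε) * exp (β * x) := by
    nlinarith [add_one_le_exp (β * x), mul_le_mul_of_nonneg_left hε hx]
  calc s ^ β * (1 - log s) ≤ s ^ β * ((1 - log ε) * exp (β * x)) := by gcongr
    _ = ε ^ β * (1 - log ε) := by
      rw [rpow_def_of_pos hs, rpow_def_of_pos (hs.trans_le hsε), mul_left_comm, ← exp_add, hxdef]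
      ring_nf

lemma norm_f_sub_f_le_rpow {α ε : ℝ} (hα : α ∈ Set.Ioo 0 1) (hε : 0 < ε)
    (hεδ : ε ≤ exp (α / (α - 1))) {a b : ℂ} (ha : ‖a‖ ≤ ε) (hb : ‖b‖ ≤ ε) :
    ‖f a - f b‖ ≤ (2 * ε) ^ (1 - α) * (|log ε| + 1) * ‖a - b‖ ^ α := by
  wlog hba : ‖b‖ ≤ ‖a‖ generalizing a b
  · rw [norm_sub_rev, norm_sub_rev a]
    exact this hb ha (le_of_not_ge hba)
  obtain ⟨hα0, hα1⟩ := hα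
  have hε1 : ε < 1 := hεδ.trans_lt (exp_lt_one_iff.2 (div_neg_of_pos_of_neg hα0 (by linarith)))
  have hlogε : log ε ≤ α / (α - 1) := (log_le_iff_le_exp hε).2 hεδ
  have hβ : 1 ≤ (1 - α) * (1 - log ε) := by
    have : (1 - α) * (α / (α - 1)) = -α := by
      field_simp [show α - 1 ≠ 0 by linarith]; ring
    nlinarith
  have hloga : 0 ≤ 1 - log ‖a‖ := by linarith [log_nonpos (norm_nonneg a) (ha.trans hε1.le)]
  have hab : ‖a - b‖ ≤ 2 * ‖a‖ := by linarith [norm_sub_le a b]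
  calc ‖f a - f b‖ ≤ ‖a - b‖ * (1 - log ‖a‖) := norm_f_sub_f_le hba (ha.trans hε1.le)
    _ = ‖a - b‖ ^ α * (‖a - b‖ ^ (1 - α) * (1 - log ‖a‖)) := by
        rw [← mul_assoc, ← rpow_add' (norm_nonneg _) (by norm_num), add_sub_cancel, rpow_one]
    _ ≤ ‖a - b‖ ^ α * (2 ^ (1 - α) * (‖a‖ ^ (1 - α) * (1 - log ‖a‖))) := by
        rw [← mul_assoc (2 ^ (1 - α)), ← mul_rpow zero_le_two (norm_nonneg a)]
        gcongr
    _ ≤ ‖a - b‖ ^ α * (2 ^ (1 - α) * (ε ^ (1 - α) * (1 - log ε))) := by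
        gcongr ‖a - b‖ ^ α * (2 ^ (1 - α) * ?_)
        exact rpow_mul_one_sub_log_le (by linarith) (norm_nonneg a) ha hβ
    _ = (2 * ε) ^ (1 - α) * (|log ε| + 1) * ‖a - b‖ ^ α := by
        rw [abs_of_neg (log_neg_iff hε |>.2 hε1), mul_rpow zero_le_two hε.le]
        ring

lemma integral_norm_sq_rpow_half_le {X E F : Type*} [MeasurableSpace X] {μ : Measure X}
    [NormedAddCommGroup E] [NormedAddCommGroup F] {φ : X → E} {ψ : X → F} {C α : ℝ}
    (hC : 0 ≤ C) (hα : α ≠ 0) (hψ : Integrable (fun x => ‖ψ x‖ ^ (2 * α)) μ)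
    (hφψ : ∀ᵐ x ∂μ, ‖φ x‖ ≤ C * ‖ψ x‖ ^ α) :
    (∫ x, ‖φ x‖ ^ (2 : ℝ) ∂μ) ^ ((1 : ℝ) / 2) ≤
      C * ((∫ x, ‖ψ x‖ ^ (2 * α) ∂μ) ^ (1 / (2 * α))) ^ α := by
  have hsq : ∀ᵐ x ∂μ, ‖φ x‖ ^ (2 : ℝ) ≤ C ^ 2 * ‖ψ x‖ ^ (2 * α) := by
    filter_upwards [hφψ] with x hx
    calc ‖φ x‖ ^ (2 : ℝ) ≤ (C * ‖ψ x‖ ^ α) ^ (2 : ℝ) := by gcongr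
      _ = C ^ 2 * ‖ψ x‖ ^ (2 * α) := by
        rw [rpow_two, mul_pow, ← rpow_mul_natCast (norm_nonneg _), mul_comm α]
        norm_num
  have hI : 0 ≤ ∫ x, ‖ψ x‖ ^ (2 * α) ∂μ := integral_nonneg fun x => by positivity
  calc (∫ x, ‖φ x‖ ^ (2 : ℝ) ∂μ) ^ ((1 : ℝ) / 2)
      ≤ (C ^ 2 * ∫ x, ‖ψ x‖ ^ (2 * α) ∂μ) ^ ((1 : ℝ) / 2) := by
        rw [← integral_const_mul]
        exact rpow_le_rpow (integral_nonneg fun x => by positivity)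
          (integral_mono_of_nonneg (.of_forall fun x => by positivity) (hψ.const_mul _) hsq)
          (by norm_num)
    _ = C * ((∫ x, ‖ψ x‖ ^ (2 * α) ∂μ) ^ (1 / (2 * α))) ^ α := by
        rw [mul_rpow (sq_nonneg C) hI, ← rpow_mul hI, ← sqrt_eq_rpow, sqrt_sq hC]
        field_simp

theorem stmt_10_general {d : ℕ} (Ω : Set (Fin d → ℝ))
    (hfin : volume Ω ≠ ⊤) (α : ℝ) (hα : α ∈ Set.Ioo (0:ℝ) 1)
    (ε : ℝ) (hε : 0 < ε) (hεδ : ε ≤ Real.exp (α / (α - 1)))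
    (u v : (Fin d → ℝ) → ℂ) (hu : Measurable u) (hv : Measurable v)
    (hub : ∀ᵐ x ∂(volume.restrict Ω), ‖u x‖ ≤ ε)
    (hvb : ∀ᵐ x ∂(volume.restrict Ω), ‖v x‖ ≤ ε) :
    (∫ x in Ω, ‖f (u x) - f (v x)‖ ^ (2:ℝ)) ^ ((1:ℝ) / 2) ≤
      (2 * ε) ^ (1 - α) * (|Real.log ε| + 1) *
        ((∫ x in Ω, ‖u x - v x‖ ^ (2 * α)) ^ (1 / (2 * α))) ^ α := by
  have : IsFiniteMeasure (volume.restrict Ω) := isFiniteMeasure_restrict.2 hfin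
  have hint : Integrable (fun x => ‖u x - v x‖ ^ (2 * α)) (volume.restrict Ω) := by
    refine .of_bound ((hu.sub hv).norm.pow_const _).aestronglyMeasurable ((2 * ε) ^ (2 * α)) ?_
    filter_upwards [hub, hvb] with x hux hvx
    rw [norm_of_nonneg (by positivity)]
    exact rpow_le_rpow (norm_nonneg _) (by linarith [norm_sub_le (u x) (v x)]) (by linarith [hα.1])
  refine integral_norm_sq_rpow_half_le (by positivity) hα.1.ne' hint ?_
  filter_upwards [hub, hvb] with x hux hvx using norm_f_sub_f_le_rpow hα hε hεδ hux hvx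

theorem stmt_10 {d : ℕ} (Ω : Set (Fin d → ℝ)) (hΩ : MeasurableSet Ω)
    (hfin : volume Ω ≠ ⊤) (α : ℝ) (hα : α ∈ Set.Ioo (0:ℝ) 1)
    (ε : ℝ) (hε : 0 < ε) (hεδ : ε ≤ Real.exp (α / (α - 1)))
    (u v : (Fin d → ℝ) → ℂ) (hu : Measurable u) (hv : Measurable v)
    (hub : ∀ᵐ x ∂(volume.restrict Ω), ‖u x‖ ≤ ε)
    (hvb : ∀ᵐ x ∂(volume.restrict Ω), ‖v x‖ ≤ ε) :
    (∫ x in Ω, ‖f (u x) - f (v x)‖ ^ (2:ℝ)) ^ ((1:ℝ) / 2) ≤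
      (2 * ε) ^ (1 - α) * (|Real.log ε| + 1) *
        ((∫ x in Ω, ‖u x - v x‖ ^ (2 * α)) ^ (1 / (2 * α))) ^ α :=
  stmt_10_general Ω hfin α hα ε hε hεδ u v hu hv hub hvb
end
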